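/- arXiv:1111.6124 — 2 statements merged into one kernel-verified Lean document; each statement's English description precedes it below -/
import Mathlib

section
/- Let p be a polynomial in one variable with roots t₁, …, t_k, let A be a unital C*-algebra with closed two-sided ideal I, and let x ∈ A/I satisfy p(x) = 0 and ‖x‖ > max_i |t_i|. If x admits a lift X ∈ A with p(X) = 0, then x admits a lift X̃ ∈ A with p(X̃) = 0 and ‖X̃‖ = ‖x‖. -/
/-!
Put `r = ‖x‖` and `a = r⁻¹ X`. The spectrum of `X` consists of roots of `p`, so the spectral
radius of `a` is `< 1`, while `‖φ a‖ = 1`. Hence `c = (a⋆a - 1)₊` lies in the kernel of `φ`, and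
the series `t = ∑ (a⋆)ⁿ c aⁿ` converges to a positive solution of the Stein equation
`t - a⋆ t a = c` that also lies in the kernel. For `d = 1 + t` this gives
`a⋆ d a = a⋆a - c + t ≤ 1 + t = d`, so conjugating by the invertible `u = √d`, which maps to `1`,
yields `‖u a u⁻¹‖ ≤ 1`. Thus `u X u⁻¹` is a lift of `x` of norm `≤ ‖x‖`, hence `= ‖x‖` since `φ`
is contractive, and it still satisfies `p(u X u⁻¹) = u p(X) u⁻¹ = 0`.
-/

open Polynomial Filter Topology
open scoped NNReal ENNReal CStarAlgebra

lemma Polynomial.aeval_units_mul_mul_inv {R A : Type*} [CommSemiring R] [Ring A] [Algebra R A]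
    (u : Aˣ) (a : A) (p : R[X]) : aeval (↑u * a * ↑u⁻¹) p = ↑u * aeval a p * ↑u⁻¹ := by
  simpa [ConjAct.units_smul_def] using
    aeval_algHom_apply (MulSemiringAction.toAlgHom R A (ConjAct.toConjAct u)) a p

lemma spectrum.mem_roots_of_aeval_eq_zero {𝕜 A : Type*} [Field 𝕜] [Ring A] [Algebra 𝕜 A]
    {a : A} {p : 𝕜[X]} (hp : p ≠ 0) (h : aeval a p = 0) {z : 𝕜} (hz : z ∈ spectrum 𝕜 a) :
    z ∈ p.roots := by
  obtain _ | _ := subsingleton_or_nontrivial A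
  · simp [spectrum.of_subsingleton] at hz
  have := spectrum.subset_polynomial_aeval a p ⟨z, hz, rfl⟩
  rw [h, spectrum.zero_eq] at this
  exact (mem_roots hp).2 this

section BanachAlgebra

variable {A : Type*} [NormedRing A] [NormedAlgebra ℂ A] [CompleteSpace A]

lemma spectrum.spectralRadius_inv_smul_lt_one [Nontrivial A] {a : A} {r : ℝ≥0}
    (h : spectralRadius ℂ a < r) : spectralRadius ℂ ((r⁻¹ : ℂ) • a) < 1 := by
  have hr : r ≠ 0 := by
    rintro rfl
    exact not_lt_zero h
  rw [← ENNReal.coe_one]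
  refine spectrum.spectralRadius_lt_of_forall_lt _ fun z hz ↦ ?_
  have hr' : (r⁻¹ : ℂ) ≠ 0 := by simpa using hr
  rw [← Units.val_mk0 hr', ← Units.smul_def, spectrum.unit_smul_eq_smul] at hz
  obtain ⟨w, hw, rfl⟩ := Set.mem_smul_set.mp hz
  have hw : ‖w‖₊ < r := ENNReal.coe_lt_coe.mp <|
    (le_iSup₂ (f := fun k _ ↦ (‖k‖₊ : ℝ≥0∞)) w hw).trans_lt h
  rw [Units.smul_mk0, smul_eq_mul, nnnorm_mul, nnnorm_inv, Complex.nnnorm_real, NNReal.nnnorm_eq]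
  exact (inv_mul_lt_one₀ (pos_iff_ne_zero.mpr hr)).mpr hw

lemma spectrum.eventually_norm_pow_le_of_spectralRadius_lt {a : A} {s : ℝ≥0}
    (h : spectralRadius ℂ a < s) : ∀ᶠ n : ℕ in atTop, ‖a ^ n‖ ≤ s ^ n := by
  filter_upwards [(pow_nnnorm_pow_one_div_tendsto_nhds_spectralRadius a).eventually_lt_const h,
    eventually_ne_atTop 0] with n hn hn0
  have := pow_le_pow_left₀ zero_le hn.le n
  rw [← ENNReal.rpow_natCast, ← ENNReal.rpow_mul, one_div_mul_cancel (by exact_mod_cast hn0),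
    ENNReal.rpow_one] at this
  exact_mod_cast this

lemma summable_star_pow_mul_mul_pow [StarRing A] [NormedStarGroup A] {a : A}
    (h : spectralRadius ℂ a < 1) (c : A) : Summable fun n ↦ star (a ^ n) * c * a ^ n := by
  obtain ⟨s, hρs, hs1⟩ := ENNReal.lt_iff_exists_nnreal_btwn.mp h
  have hs2 : (s : ℝ) ^ 2 < 1 := pow_lt_one₀ s.2 (by exact_mod_cast hs1) two_ne_zero
  refine .of_norm_bounded_eventually_nat
    ((summable_geometric_of_lt_one (by positivity) hs2).mul_left ‖c‖)
    ((spectrum.eventually_norm_pow_le_of_spectralRadius_lt hρs).mono fun n hn ↦ ?_)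
  calc ‖star (a ^ n) * c * a ^ n‖ ≤ ‖a ^ n‖ * ‖c‖ * ‖a ^ n‖ := by
        simpa only [norm_star] using norm_mul₃_le (a := star (a ^ n)) (b := c) (c := a ^ n)
    _ ≤ s ^ n * ‖c‖ * s ^ n := by gcongr
    _ = ‖c‖ * ((s : ℝ) ^ 2) ^ n := by ring

end BanachAlgebra

section Stein

variable {A : Type*} [Ring A] [StarRing A] [TopologicalSpace A]

noncomputable def steinSum (a c : A) : A := ∑' n, star (a ^ n) * c * a ^ n

lemma steinSum_nonneg [PartialOrder A] [StarOrderedRing A] [OrderClosedTopology A] {a c : A}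
    (hc : 0 ≤ c) : 0 ≤ steinSum a c :=
  tsum_nonneg fun _ ↦ star_left_conjugate_nonneg hc _

lemma map_steinSum_eq_zero {B F : Type*} [Ring B] [TopologicalSpace B] [T2Space B]
    [FunLike F A B] [RingHomClass F A B] (φ : F) (hφ : Continuous φ) {a c : A} (hc : φ c = 0) :
    φ (steinSum a c) = 0 := by
  by_cases hs : Summable fun n ↦ star (a ^ n) * c * a ^ n
  · rw [steinSum, hs.map_tsum φ hφ]
    simp [hc]
  · rw [steinSum, tsum_eq_zero_of_not_summable hs, map_zero]

variable [IsTopologicalRing A] [T2Space A] {a c : A}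

lemma star_mul_steinSum_mul (hs : Summable fun n ↦ star (a ^ n) * c * a ^ n) :
    star a * steinSum a c * a = steinSum a c - c := by
  have hshift : star a * steinSum a c * a = ∑' n, star (a ^ (n + 1)) * c * a ^ (n + 1) := by
    rw [steinSum, ← hs.tsum_mul_left, ← (hs.mul_left _).tsum_mul_right]
    refine tsum_congr fun n ↦ ?_
    rw [pow_succ, star_mul]
    simp only [mul_assoc]
  rw [hshift, steinSum, hs.tsum_eq_zero_add]
  simp

end Stein

lemma map_units_mul_mul_inv {M N F : Type*} [Monoid M] [Monoid N] [FunLike F M N]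
    [MonoidHomClass F M N] (φ : F) {u : Mˣ} (hu : φ u = 1) (a : M) :
    φ (u * a * ↑u⁻¹) = φ a := by
  have hu' : φ ↑u⁻¹ = 1 := by
    have := congr_arg φ u.inv_mul
    rwa [map_mul, hu, mul_one, map_one] at this
  rw [map_mul, map_mul, hu, hu', one_mul, mul_one]

section CStarAlgebra

variable {A B : Type*} [CStarAlgebra A] [PartialOrder A] [StarOrderedRing A]
  [CStarAlgebra B] [PartialOrder B] [StarOrderedRing B]

lemma norm_units_mul_mul_inv_le_one {u : Aˣ} {a : A}
    (h : star a * (star ↑u * ↑u) * a ≤ star ↑u * ↑u) : ‖↑u * a * ↑u⁻¹‖ ≤ 1 := by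
  have hle : star (↑u * a * ↑u⁻¹) * (↑u * a * ↑u⁻¹) ≤ 1 :=
    calc star (↑u * a * ↑u⁻¹) * (↑u * a * ↑u⁻¹)
        = star (↑u⁻¹ : A) * (star a * (star ↑u * ↑u) * a) * ↑u⁻¹ := by
          simp only [star_mul, mul_assoc]
      _ ≤ star (↑u⁻¹ : A) * (star ↑u * ↑u) * ↑u⁻¹ := star_left_conjugate_le_conjugate h _
      _ = 1 := by simp [mul_assoc, ← star_mul]
  rw [← sq_le_one_iff₀ (norm_nonneg _), sq, ← CStarRing.norm_star_mul_self]
  exact (CStarAlgebra.norm_le_one_iff_of_nonneg _ (star_mul_self_nonneg _)).mpr hle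

lemma posPart_star_mul_self_sub_one_eq_zero {b : A} (hb : ‖b‖ ≤ 1) : (star b * b - 1)⁺ = 0 := by
  rw [CFC.posPart_eq_zero_iff (star b * b - 1), sub_nonpos,
    ← CStarAlgebra.norm_le_one_iff_of_nonneg (star b * b),
    CStarRing.norm_star_mul_self]
  exact mul_le_one₀ hb (norm_nonneg b) hb

lemma star_mul_one_add_steinSum_mul_le {a c : A}
    (hs : Summable fun n ↦ star (a ^ n) * c * a ^ n) (h : star a * a ≤ 1 + c) :
    star a * (1 + steinSum a c) * a ≤ 1 + steinSum a c :=
  calc star a * (1 + steinSum a c) * a = star a * a - c + steinSum a c := by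
        rw [mul_add, add_mul, mul_one, star_mul_steinSum_mul hs]; abel
    _ ≤ 1 + steinSum a c := by gcongr; exact sub_le_iff_le_add.mpr h

theorem exists_units_map_eq_one_norm_mul_mul_inv_le_one (φ : A →⋆ₐ[ℂ] B) {a : A}
    (ha : spectralRadius ℂ a < 1) (hφa : ‖φ a‖ ≤ 1) :
    ∃ u : Aˣ, φ u = 1 ∧ ‖↑u * a * ↑u⁻¹‖ ≤ 1 := by
  have hφc : φ (star a * a - 1)⁺ = 0 := by
    rw [CFC.posPart_def, NonUnitalStarAlgHomClass.map_cfcₙ φ (·⁺ : ℝ → ℝ) (star a * a - 1)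
      (hφa := ((IsSelfAdjoint.star_mul_self a).sub (.one A)).map φ), map_sub, map_mul, map_star,
      map_one, ← CFC.posPart_def]
    exact posPart_star_mul_self_sub_one_eq_zero hφa
  set c := (star a * a - 1)⁺
  have hac : star a * a ≤ 1 + c := sub_le_iff_le_add'.mp CFC.le_posPart
  set d := 1 + steinSum a c
  have hd : IsStrictlyPositive d :=
    isStrictlyPositive_one.add_nonneg (steinSum_nonneg (CFC.posPart_nonneg _))
  have hφd : φ d = 1 := by simp [d, map_steinSum_eq_zero φ (map_continuous φ) hφc]
  obtain ⟨u, hu⟩ := (hd.sqrt).isUnit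
  have huu : star (u : A) * u = d := by
    rw [hu, (CFC.sqrt_nonneg d).isSelfAdjoint.star_eq, CFC.sqrt_mul_sqrt_self d]
  refine ⟨u, ?_, norm_units_mul_mul_inv_le_one ?_⟩
  · rw [hu, ← CFC.sqrt_one, ← hφd]
    exact (CFC.sqrt_unique (by rw [← map_mul, CFC.sqrt_mul_sqrt_self d])
      (map_nonneg φ (CFC.sqrt_nonneg d))).symm
  · rw [huu]
    exact star_mul_one_add_steinSum_mul_le (summable_star_pow_mul_mul_pow ha c) hac

theorem exists_units_map_eq_one_norm_mul_mul_inv_eq [Nontrivial A] (φ : A →⋆ₐ[ℂ] B) {a : A}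
    (ha : spectralRadius ℂ a < ‖φ a‖₊) :
    ∃ u : Aˣ, φ u = 1 ∧ ‖↑u * a * ↑u⁻¹‖ = ‖φ a‖ := by
  have hr : 0 < ‖φ a‖ := by
    rw [← coe_nnnorm, NNReal.coe_pos, pos_iff_ne_zero]
    rintro h
    simp [h] at ha
  obtain ⟨u, hu, hle⟩ := exists_units_map_eq_one_norm_mul_mul_inv_le_one φ
    (spectrum.spectralRadius_inv_smul_lt_one ha) (by simp [norm_smul, inv_mul_cancel₀ hr.ne'])
  refine ⟨u, hu, le_antisymm ?_ ?_⟩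
  · rw [mul_smul_comm, smul_mul_assoc, norm_smul] at hle
    simpa [inv_mul_le_one₀ hr] using hle
  · simpa [map_units_mul_mul_inv φ hu] using NonUnitalStarAlgHom.norm_apply_le φ (↑u * a * ↑u⁻¹)

end CStarAlgebra

theorem lift_poly_relation_with_norm_general
    {A B : Type*}
    [NormedRing A] [StarRing A] [CStarRing A] [NormedAlgebra ℂ A]
    [CompleteSpace A] [NormOneClass A] [StarModule ℂ A]
    [NormedRing B] [StarRing B] [CStarRing B] [NormedAlgebra ℂ B]
    [CompleteSpace B] [StarModule ℂ B]
    (φ : A →⋆ₐ[ℂ] B)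
    (p : Polynomial ℂ) (hp : p.Monic)
    (x : B)
    (hnorm : ∀ t ∈ p.roots, ‖t‖ < ‖x‖)
    (X : A) (hX : φ X = x) (hXp : aeval X p = 0) :
    ∃ X' : A, φ X' = x ∧ aeval X' p = 0 ∧ ‖X'‖ = ‖x‖ := by
  let _ : CStarAlgebra A := {}
  let _ : CStarAlgebra B := {}
  let _ := CStarAlgebra.spectralOrder A
  let _ := CStarAlgebra.spectralOrder B
  have _ := CStarAlgebra.spectralOrderedRing A
  have _ := CStarAlgebra.spectralOrderedRing B
  have _ : Nontrivial A := NormOneClass.nontrivial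
  subst hX
  have hρ : spectralRadius ℂ X < ‖φ X‖₊ := spectrum.spectralRadius_lt_of_forall_lt X fun z hz ↦
    hnorm z (spectrum.mem_roots_of_aeval_eq_zero hp.ne_zero hXp hz)
  obtain ⟨u, hu, hu_norm⟩ := exists_units_map_eq_one_norm_mul_mul_inv_eq φ hρ
  exact ⟨↑u * X * ↑u⁻¹, map_units_mul_mul_inv φ hu X,
    by rw [aeval_units_mul_mul_inv, hXp, mul_zero, zero_mul], hu_norm⟩

/-- Lemma (basic lifting lemma): let `φ : A → B` be a surjective *-homomorphism of
unital C*-algebras (so `B ≅ A/I` with `I = ker φ`), `p` a monic polynomial with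
root multiset `p.roots`, and `x ∈ B` with `p(x) = 0` and `‖x‖ > max |tᵢ|`.
If `x` lifts to `X ∈ A` with `p(X) = 0`, then it lifts to `X̃ ∈ A` with
`p(X̃) = 0` and `‖X̃‖ = ‖x‖`. -/
theorem lift_poly_relation_with_norm
    {A B : Type*}
    [NormedRing A] [StarRing A] [CStarRing A] [NormedAlgebra ℂ A]
    [CompleteSpace A] [NormOneClass A] [StarModule ℂ A]
    [NormedRing B] [StarRing B] [CStarRing B] [NormedAlgebra ℂ B]
    [CompleteSpace B] [NormOneClass B] [StarModule ℂ B]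
    (φ : A →⋆ₐ[ℂ] B) (hφ : Function.Surjective φ)
    (p : Polynomial ℂ) (hp : p.Monic)
    (x : B) (hx : aeval x p = 0)
    (hnorm : ∀ t ∈ p.roots, ‖t‖ < ‖x‖)
    (X : A) (hX : φ X = x) (hXp : aeval X p = 0) :
    ∃ X' : A, φ X' = x ∧ aeval X' p = 0 ∧ ‖X'‖ = ‖x‖ :=
  lift_poly_relation_with_norm_general φ p hp x hnorm X hX hXp
end

section
/- Let B ⊆ B(H) be a C*-subalgebra of the bounded operators on a Hilbert space H, and let b ∈ B be an idempotent (b² = b). Then the orthogonal projection onto the range of b belongs to B. -/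
/-!
For an idempotent `b`, the element `w = (b - b⋆)(b - b⋆)⋆ ≥ 0` commutes with `b`, and
`b (1 + w) = b b⋆ b`. Hence `p = b b⋆ (1 + w)⁻¹` is a self-adjoint idempotent with `p b = b`
and range contained in that of `b`: it is the orthogonal projection onto the range of `b`.
As `B` need not be unital, write `(1 + w)⁻¹ = 1 - y` with `y = cfcₙ (t ↦ t / (1 + t)) w`;
then `y ∈ B` because `B` is closed, so `p = b b⋆ - b b⋆ y ∈ B`.
-/

variable {H : Type*} [NormedAddCommGroup H] [InnerProductSpace ℂ H] [CompleteSpace H]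

/-- The orthogonal projection of `H` onto a closed subspace `K`, as an element of `B(H)`. -/
noncomputable def orthProjOnto (K : Submodule ℂ H) (hK : IsClosed (K : Set H)) :
    H →L[ℂ] H :=
  haveI : CompleteSpace K := hK.completeSpace_coe
  K.subtypeL.comp (K.orthogonalProjectionOnto)

section IdempotentDefect

variable {A : Type*} [Ring A] [StarRing A] {b : A}

-- In a C⋆-algebra this vanishes exactly when `b` is self-adjoint.
def idempotentDefect (b : A) : A := (b - star b) * star (b - star b)

theorem idempotentDefect_eq (hb : IsIdempotentElem b) :
    idempotentDefect b = b * star b - b - star b + star b * b := by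
  have hb' : star b * star b = star b := by rw [← star_mul, hb.eq]
  calc idempotentDefect b = b * star b - b * b - star b * star b + star b * b := by
        rw [idempotentDefect, star_sub, star_star]; noncomm_ring
    _ = b * star b - b - star b + star b * b := by rw [hb.eq, hb']

theorem idempotentDefect_mul_self (hb : IsIdempotentElem b) :
    idempotentDefect b * b = b * star b * b - b := by
  rw [idempotentDefect_eq hb, add_mul, sub_mul, sub_mul, hb.eq, mul_assoc (star b), hb.eq]
  abel

theorem mul_idempotentDefect_self (hb : IsIdempotentElem b) :
    b * idempotentDefect b = b * star b * b - b := by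
  rw [idempotentDefect_eq hb, mul_add, mul_sub, mul_sub, ← mul_assoc, hb.eq, ← mul_assoc]
  abel

theorem commute_idempotentDefect_self (hb : IsIdempotentElem b) :
    Commute (idempotentDefect b) b :=
  (idempotentDefect_mul_self hb).trans (mul_idempotentDefect_self hb).symm

theorem mul_one_add_idempotentDefect (hb : IsIdempotentElem b) :
    b * (1 + idempotentDefect b) = b * star b * b := by
  rw [mul_add, mul_one, mul_idempotentDefect_self hb, add_sub_cancel]

theorem isStarProjection_mul_star_mul (hb : IsIdempotentElem b) {q : A} (hq : IsSelfAdjoint q)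
    (hqb : Commute q b) (hinv : (1 + idempotentDefect b) * q = 1) :
    IsStarProjection (b * star b * q) ∧ b * star b * q * b = b := by
  have hpb : b * star b * q * b = b := by
    rw [mul_assoc, hqb.eq, ← mul_assoc, ← mul_one_add_idempotentDefect hb, mul_assoc, hinv,
      mul_one]
  have hqb' : Commute q (star b) := by simpa [hq.star_eq] using hqb.star_star
  refine ⟨⟨?_, ?_⟩, hpb⟩
  · calc b * star b * q * (b * star b * q) = b * star b * q * b * (star b * q) := by noncomm_ring
      _ = b * star b * q := by rw [hpb, mul_assoc]
  · rw [IsSelfAdjoint, star_mul, star_mul, star_star, hq.star_eq]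
    exact (hqb.mul_right hqb').eq

end IdempotentDefect

theorem one_add_mul_one_sub_cfcₙ_div_one_add {A : Type*} [CStarAlgebra A] [PartialOrder A]
    [StarOrderedRing A] {w : A} (hw : 0 ≤ w) :
    (1 + w) * (1 - cfcₙ (fun t : ℝ => t / (1 + t)) w) = 1 := by
  have hpos : ∀ t ∈ quasispectrum ℝ w, 1 + t ≠ 0 := fun t ht => by
    linarith [quasispectrum_nonneg_of_nonneg w hw t ht]
  set y := cfcₙ (fun t : ℝ => t / (1 + t)) w
  have hresolvent : y + w * y = w :=
    calc _ = cfcₙ (fun t : ℝ => t / (1 + t) + t * (t / (1 + t))) w := by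
          rw [cfcₙ_add _ _ w, cfcₙ_mul _ _ w, cfcₙ_id' ℝ w]
      _ = cfcₙ id w := cfcₙ_congr fun t ht => by
          simp only [id]; field_simp [hpos t ht]
      _ = w := cfcₙ_id ℝ w
  calc (1 + w) * (1 - y) = 1 + w - (y + w * y) := by noncomm_ring
    _ = 1 := by rw [hresolvent, add_sub_cancel_right]

theorem Module.End.range_eq_range_of_mul_eq_self {R M : Type*} [Semiring R] [AddCommMonoid M]
    [Module R M] {p b c : Module.End R M} (hpb : p * b = b) (hbc : b * c = p) :
    LinearMap.range p = LinearMap.range b := by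
  refine le_antisymm ?_ ?_
  · rw [← hbc, Module.End.mul_eq_comp]; exact LinearMap.range_comp_le_range _ _
  · conv_lhs => rw [← hpb, Module.End.mul_eq_comp]
    exact LinearMap.range_comp_le_range _ _

theorem orthProjOnto_eq_of_isStarProjection {p : H →L[ℂ] H} (hp : IsStarProjection p)
    {K : Submodule ℂ H} (hK : IsClosed (K : Set H))
    (hpK : LinearMap.range (p : H →ₗ[ℂ] H) = K) :
    orthProjOnto K hK = p := by
  subst hpK
  obtain ⟨_, hp_eq⟩ := isStarProjection_iff_eq_starProjection_range.mp hp
  exact hp_eq.symm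

/-- Let `B ⊆ B(H)` be a (not necessarily unital) closed *-subalgebra of the bounded
operators on a Hilbert space and `b ∈ B` an idempotent.  Then the orthogonal
projection onto the range of `b` (which is closed, hypothesis `hcl`) belongs to `B`. -/
theorem orthogonalProjection_range_mem_of_idempotent
    (B : NonUnitalStarSubalgebra ℂ (H →L[ℂ] H)) (hB : IsClosed (B : Set (H →L[ℂ] H)))
    (b : H →L[ℂ] H) (hb : b ∈ B) (hidem : b * b = b)
    (hcl : IsClosed ((LinearMap.range (b : H →ₗ[ℂ] H) : Submodule ℂ H) : Set H)) :
    orthProjOnto (LinearMap.range (b : H →ₗ[ℂ] H)) hcl ∈ B := by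
  set y := cfcₙ (fun t : ℝ => t / (1 + t)) (idempotentDefect b)
  have hyB : y ∈ B := cfcₙ_mem (hs := hB) _ <|
    mul_mem (sub_mem hb (star_mem hb)) (star_mem (sub_mem hb (star_mem hb)))
  obtain ⟨hp, hpb⟩ := isStarProjection_mul_star_mul hidem
    ((IsSelfAdjoint.one _).sub (cfcₙ_predicate _ _))
    ((Commute.one_left b).sub_left ((commute_idempotentDefect_self hidem).cfcₙ_real _))
    (one_add_mul_one_sub_cfcₙ_div_one_add (mul_star_self_nonneg _))
  have hrange : LinearMap.range ((b * star b * (1 - y) : H →L[ℂ] H) : H →ₗ[ℂ] H) =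
      LinearMap.range (b : H →ₗ[ℂ] H) :=
    Module.End.range_eq_range_of_mul_eq_self
      (c := ((star b * (1 - y) : H →L[ℂ] H) : H →ₗ[ℂ] H))
      (by rw [← ContinuousLinearMap.toLinearMap_mul, hpb])
      (by rw [← ContinuousLinearMap.toLinearMap_mul, mul_assoc])
  rw [orthProjOnto_eq_of_isStarProjection hp hcl hrange, mul_sub, mul_one]
  exact sub_mem (mul_mem hb (star_mem hb)) (mul_mem (mul_mem hb (star_mem hb)) hyB)
end
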